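/- arXiv:1301.2205 — 3 statements merged into one kernel-verified Lean document; each statement's English description precedes it below -/
import Mathlib

section
/- Let p be a prime, r ≥ 1, and let c₀, …, cₙ be integers with c₀ and cₙ units mod p. Then the ZMod(p^r)-module of bi-infinite sequences x : ℤ → ZMod (p^r) satisfying c₀·x_j + … + cₙ·x_{j+n} = 0 for all j is isomorphic to (ZMod (p^r))^n, via the map sending a solution to its initial segment (x₀,…,x_{n-1}). -/
private def myExt (n : ℕ) (hn : 1 ≤ n) {R : Type*} [CommRing R] (c : Fin (n + 1) → R)
    (a b : R) (v : Fin n → R) (j : ℤ) : R :=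
  if h1 : 0 ≤ j ∧ j < n then v ⟨j.toNat, by omega⟩
  else if h2 : (n : ℤ) ≤ j then
    -b * ∑ i : Fin n, c i.castSucc * myExt n hn c a b v (j - n + i)
  else
    -a * ∑ i : Fin n, c i.succ * myExt n hn c a b v (j + 1 + i)
termination_by (j - n + 1).toNat + (-j).toNat
decreasing_by
  · have hi : (i : ℤ) < n := by exact_mod_cast i.isLt
    omega
  · have hi : (i : ℤ) < n := by exact_mod_cast i.isLt
    omega

private lemma myExt_base (n : ℕ) (hn : 1 ≤ n) {R : Type*} [CommRing R] (c : Fin (n + 1) → R)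
    (a b : R) (v : Fin n → R) (i : Fin n) : myExt n hn c a b v (i : ℕ) = v i := by
  rw [myExt]
  have hi : ((i : ℕ) : ℤ) < n := by exact_mod_cast i.isLt
  rw [dif_pos ⟨by positivity, hi⟩]
  congr 1

private lemma myExt_fwd (n : ℕ) (hn : 1 ≤ n) {R : Type*} [CommRing R] (c : Fin (n + 1) → R)
    (a b : R) (v : Fin n → R) (j : ℤ) (hj : (n : ℤ) ≤ j) :
    myExt n hn c a b v j = -b * ∑ i : Fin n, c i.castSucc * myExt n hn c a b v (j - n + i) := by
  rw [myExt, dif_neg (by omega), dif_pos hj]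

private lemma myExt_bwd (n : ℕ) (hn : 1 ≤ n) {R : Type*} [CommRing R] (c : Fin (n + 1) → R)
    (a b : R) (v : Fin n → R) (j : ℤ) (hj : j < 0) :
    myExt n hn c a b v j = -a * ∑ i : Fin n, c i.succ * myExt n hn c a b v (j + 1 + i) := by
  rw [myExt, dif_neg (by omega), dif_neg (by omega)]

private lemma myExt_rec (n : ℕ) (hn : 1 ≤ n) {R : Type*} [CommRing R] (c : Fin (n + 1) → R)
    (a b : R) (v : Fin n → R) (ha : c 0 * a = 1) (hb : c (Fin.last n) * b = 1) (j : ℤ) :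
    ∑ i : Fin (n + 1), c i * myExt n hn c a b v (j + (i : ℕ)) = 0 := by
  set x := myExt n hn c a b v with hx
  by_cases hj : 0 ≤ j
  · rw [Fin.sum_univ_castSucc]
    simp only [Fin.coe_castSucc, Fin.val_last]
    have key := myExt_fwd n hn c a b v (j + n) (by omega)
    rw [← hx] at key
    have e : ∀ i : Fin n, j + (n : ℤ) - n + i = j + i := fun i => by ring
    simp only [e] at key
    rw [key]
    set S := ∑ i : Fin n, c i.castSucc * x (j + (i : ℕ)) with hS
    rw [show c (Fin.last n) * (-b * S) = -((c (Fin.last n) * b) * S) by ring, hb, one_mul]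
    exact add_neg_cancel S
  · rw [Fin.sum_univ_succ]
    simp only [Fin.val_zero, Nat.cast_zero, add_zero, Fin.val_succ, Nat.cast_add, Nat.cast_one]
    have key := myExt_bwd n hn c a b v j (by omega)
    rw [← hx] at key
    have e : ∀ i : Fin n, j + ((i : ℤ) + 1) = j + 1 + i := fun i => by ring
    simp only [e]
    rw [key]
    set T := ∑ i : Fin n, c i.succ * x (j + 1 + (i : ℕ)) with hT
    rw [show c 0 * (-a * T) = -((c 0 * a) * T) by ring, ha, one_mul]
    exact neg_add_cancel T

private lemma int_rec_aux (n : ℕ) (hn : 1 ≤ n) (P : ℤ → Prop)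
    (base : ∀ j : ℤ, 0 ≤ j → j < n → P j)
    (fwd : ∀ j : ℤ, (n : ℤ) ≤ j → (∀ k, j - n ≤ k → k < j → P k) → P j)
    (bwd : ∀ j : ℤ, j < 0 → (∀ k, j < k → k ≤ j + n → P k) → P j) : ∀ j, P j := by
  have H : ∀ m : ℕ, ∀ j : ℤ, j.natAbs ≤ m → P j := by
    intro m
    induction m with
    | zero => intro j hj; exact base j (by omega) (by omega)
    | succ m ih =>
      intro j hj
      by_cases hneg : j < 0
      · refine bwd j hneg (fun k hk1 hk2 => ?_)
        by_cases hk : 0 ≤ k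
        · exact base k hk (by omega)
        · exact ih k (by omega)
      · by_cases hbig : (n : ℤ) ≤ j
        · exact fwd j hbig (fun k hk1 hk2 => ih k (by omega))
        · exact base j (by omega) (by omega)
  exact fun j => H j.natAbs j le_rfl

private lemma lift_unit (p : ℕ) [Fact p.Prime] (r : ℕ) (x : ℤ)
    (h : IsUnit ((x : ZMod p))) : IsUnit ((x : ZMod (p ^ r))) := by
  have key : ∀ (m : ℕ), IsUnit ((x : ZMod m)) ↔ IsUnit ((x.natAbs : ZMod m)) := by
    intro m
    obtain ⟨k, hk | hk⟩ : ∃ k : ℕ, x = k ∨ x = -k := ⟨x.natAbs, Int.natAbs_eq x⟩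
    · subst hk; simp
    · subst hk
      simp only [Int.natAbs_neg, Int.natAbs_natCast, Int.cast_neg, Int.cast_natCast,
        IsUnit.neg_iff]
  rw [key] at h ⊢
  rw [ZMod.isUnit_iff_coprime] at h ⊢
  exact h.pow_right r

/-- The `ZMod (p^r)`-module of bi-infinite solutions of the recurrence
`∑ cᵢ x_{j+i} = 0` is isomorphic to `(ZMod (p^r))^n` via evaluation at `0,…,n-1`. -/
theorem stmt_1 (p : ℕ) [Fact p.Prime] (r n : ℕ) (hr : 1 ≤ r) (hn : 1 ≤ n)
    (c : Fin (n + 1) → ℤ)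
    (h0 : IsUnit ((c 0 : ZMod p))) (hlast : IsUnit ((c (Fin.last n) : ZMod p))) :
    ∃ S : Submodule (ZMod (p ^ r)) (ℤ → ZMod (p ^ r)),
      (∀ x : ℤ → ZMod (p ^ r),
        x ∈ S ↔ ∀ j : ℤ, ∑ i : Fin (n + 1), (c i : ZMod (p ^ r)) * x (j + (i : ℕ)) = 0) ∧
      ∃ e : S ≃ₗ[ZMod (p ^ r)] (Fin n → ZMod (p ^ r)),
        ∀ x : S, e x = fun i : Fin n => (x : ℤ → ZMod (p ^ r)) (i : ℕ) := by
  set R := ZMod (p ^ r)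
  set cR : Fin (n + 1) → R := fun i => ((c i : ℤ) : R) with hcR
  obtain ⟨a, ha⟩ := (lift_unit p r (c 0) h0).exists_right_inv
  obtain ⟨b, hb⟩ := (lift_unit p r (c (Fin.last n)) hlast).exists_right_inv
  set S : Submodule R (ℤ → R) :=
    { carrier := {x | ∀ j : ℤ, ∑ i : Fin (n + 1), cR i * x (j + (i : ℕ)) = 0}
      add_mem' := by
        intro x y hx hy j
        have hxj := hx j
        have hyj := hy j
        simp only [Pi.add_apply, mul_add, Finset.sum_add_distrib, hxj, hyj, add_zero]
      zero_mem' := by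
        intro j
        simp
      smul_mem' := by
        intro t x hx j
        have hxj := hx j
        simp only [Pi.smul_apply, smul_eq_mul]
        calc ∑ i : Fin (n + 1), cR i * (t * x (j + (i : ℕ)))
            = t * ∑ i : Fin (n + 1), cR i * x (j + (i : ℕ)) := by
              rw [Finset.mul_sum]; exact Finset.sum_congr rfl (fun i _ => by ring)
          _ = 0 := by rw [hxj, mul_zero] } with hSdef
  refine ⟨S, fun x => Iff.rfl, ?_⟩
  set φ : S →ₗ[R] (Fin n → R) :=
    { toFun := fun x => fun i : Fin n => (x : ℤ → R) (i : ℕ)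
      map_add' := fun x y => rfl
      map_smul' := fun t x => rfl } with hφ
  have hinj : Function.Injective φ := by
    rw [injective_iff_map_eq_zero]
    intro x hx0
    have hx0' : ∀ i : Fin n, (x : ℤ → R) ((i : ℕ) : ℤ) = 0 := by
      intro i
      have := congrFun hx0 i
      exact this
    have hxS : ∀ j : ℤ, ∑ i : Fin (n + 1), cR i * (x : ℤ → R) (j + (i : ℕ)) = 0 := x.2
    have key : ∀ j : ℤ, (x : ℤ → R) j = 0 := by
      refine int_rec_aux n hn _ ?_ ?_ ?_
      · intro j hj1 hj2
        have := hx0' ⟨j.toNat, by omega⟩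
        simpa [Int.toNat_of_nonneg hj1] using this
      · intro j hj ih
        have hrec := hxS (j - n)
        rw [Fin.sum_univ_castSucc] at hrec
        simp only [Fin.coe_castSucc, Fin.val_last] at hrec
        have hz : ∀ i : Fin n, (x : ℤ → R) (j - n + (i : ℕ)) = 0 := by
          intro i
          have hi : ((i : ℕ) : ℤ) < n := by exact_mod_cast i.isLt
          exact ih _ (by omega) (by omega)
        have hsum : ∑ i : Fin n, cR i.castSucc * (x : ℤ → R) (j - n + (i : ℕ)) = 0 := by
          apply Finset.sum_eq_zero
          intro i _
          rw [hz i, mul_zero]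
        rw [hsum, zero_add, show j - (n : ℤ) + n = j by ring] at hrec
        have := congrArg (fun t => b * t) hrec
        simp only [mul_zero] at this
        rw [← this, ← mul_assoc, mul_comm b (cR (Fin.last n)), hb, one_mul]
      · intro j hj ih
        have hrec := hxS j
        rw [Fin.sum_univ_succ] at hrec
        simp only [Fin.val_zero, Nat.cast_zero, add_zero, Fin.val_succ, Nat.cast_add,
          Nat.cast_one] at hrec
        have hz : ∀ i : Fin n, (x : ℤ → R) (j + ((i : ℤ) + 1)) = 0 := by
          intro i
          have hi : ((i : ℕ) : ℤ) < n := by exact_mod_cast i.isLt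
          exact ih _ (by omega) (by omega)
        have hsum : ∑ i : Fin n, cR i.succ * (x : ℤ → R) (j + ((i : ℕ) + 1)) = 0 := by
          apply Finset.sum_eq_zero
          intro i _
          rw [hz i, mul_zero]
        rw [hsum, add_zero] at hrec
        have := congrArg (fun t => a * t) hrec
        simp only [mul_zero] at this
        rw [← this, ← mul_assoc, mul_comm a (cR 0), ha, one_mul]
    ext j
    exact key j
  have hsurj : Function.Surjective φ := by
    intro v
    have hmem : myExt n hn cR a b v ∈ S :=
      fun j => myExt_rec n hn cR a b v ha hb j
    refine ⟨⟨myExt n hn cR a b v, hmem⟩, ?_⟩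
    ext i
    exact myExt_base n hn cR a b v i
  exact ⟨LinearEquiv.ofBijective φ ⟨hinj, hsurj⟩, fun x => rfl⟩
end

section
/- Let T be an invertible n×n matrix over ℤ_p with T^d = I + p^s A, s ≥ 1, where not all entries of A are divisible by p (and p odd or s ≥ 2). Let T_r denote the reduction of T modulo p^r, acting on (ZMod (p^r))^n. Then the multiplicative order of T_{s+i} divides d·p^i for every i ≥ 0, and T_{s+i}^{d·p^{i-1}} ≠ I for i ≥ 1; in particular the order of T_{s+i} equals the order of T_s times p^i when the order of T_s is exactly d. -/
lemma aux_nat (p : ℕ) (hp : p.Prime) (m k : ℕ) (hm : 1 ≤ m) (hpm : p ≠ 2 ∨ 2 ≤ m)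
    (hk2 : 2 ≤ k) (hkp : k ≤ p) : p ^ (m + 2) ∣ p.choose k * p ^ (m * k) := by
  have hp2 : 2 ≤ p := hp.two_le
  rcases lt_or_eq_of_le hkp with hlt | heq
  · have h1 : p ∣ p.choose k := hp.dvd_choose_self (by omega) hlt
    have h2 : p ^ (m + 1) ∣ p ^ (m * k) := pow_dvd_pow _ (by nlinarith)
    calc p ^ (m + 2) = p * p ^ (m + 1) := by ring
    _ ∣ p.choose k * p ^ (m * k) := mul_dvd_mul h1 h2
  · subst heq
    have : m + 2 ≤ m * k := by
      rcases hpm with h | h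
      · nlinarith [lt_of_le_of_ne hp2 (Ne.symm h)]
      · nlinarith
    exact dvd_mul_of_dvd_right (pow_dvd_pow _ this) _

lemma aux_step (p : ℕ) (hp : p.Prime) (m : ℕ) (hm : 1 ≤ m) (hpm : p ≠ 2 ∨ 2 ≤ m)
    {R : Type*} [Ring R] (x : R) :
    ∃ y : R, (1 + p ^ m • x) ^ p = 1 + p ^ (m + 1) • x + p ^ (m + 2) • y := by
  refine ⟨∑ k ∈ Finset.Ico 2 (p + 1), (p.choose k * p ^ (m * k) / p ^ (m + 2)) • x ^ k, ?_⟩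
  have hcomm : Commute (p ^ m • x) (1 : R) := Commute.one_right _
  have hb := hcomm.add_pow p
  rw [add_comm (1 : R) (p ^ m • x), hb]
  have hterm : ∀ k, (p ^ m • x) ^ k * (1:R) ^ (p - k) * ↑(p.choose k)
      = (p.choose k * p ^ (m * k)) • x ^ k := by
    intro k
    rw [one_pow, mul_one, smul_pow, ← pow_mul, ← (Nat.cast_commute (p.choose k) _).eq,
      ← nsmul_eq_mul, smul_smul]
  simp only [hterm]
  have hsplit := Finset.sum_Ico_consecutive (fun k => (p.choose k * p ^ (m * k)) • x ^ k)
    (show 0 ≤ 2 by omega) (show 2 ≤ p + 1 by have := hp.two_le; omega)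
  rw [Finset.range_eq_Ico, ← hsplit]
  have h02 : ∑ k ∈ Finset.Ico 0 2, (p.choose k * p ^ (m * k)) • x ^ k
      = 1 + p ^ (m + 1) • x := by
    rw [show Finset.Ico 0 2 = Finset.range 2 from rfl, Finset.sum_range_succ,
      Finset.sum_range_one]
    simp [pow_succ, mul_comm]
  have htail : ∑ k ∈ Finset.Ico 2 (p + 1), (p.choose k * p ^ (m * k)) • x ^ k
      = p ^ (m + 2) • ∑ k ∈ Finset.Ico 2 (p + 1), (p.choose k * p ^ (m * k) / p ^ (m + 2)) • x ^ k := by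
    rw [Finset.smul_sum]
    refine Finset.sum_congr rfl fun k hk => ?_
    rw [Finset.mem_Ico] at hk
    have hdvd := aux_nat p hp m k hm hpm hk.1 (by omega)
    rw [smul_smul, Nat.mul_div_cancel' hdvd]
  rw [h02, htail]

lemma aux_iter (p : ℕ) (hp : p.Prime) (s : ℕ) (hs : 1 ≤ s) (hps : p ≠ 2 ∨ 2 ≤ s)
    {R : Type*} [Ring R] (X A : R) (hX : X = 1 + p ^ s • A) :
    ∀ i : ℕ, ∃ C : R, X ^ (p ^ i) = 1 + p ^ (s + i) • (A + p • C) := by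
  intro i
  induction i with
  | zero => exact ⟨0, by simp [hX]⟩
  | succ i ih =>
    obtain ⟨C, hC⟩ := ih
    obtain ⟨y, hy⟩ := aux_step p hp (s + i) (by omega)
      (by rcases hps with h | h; exact Or.inl h; exact Or.inr (by omega)) (A + p • C)
    refine ⟨C + y, ?_⟩
    rw [pow_succ, pow_mul, hC, hy]
    simp only [smul_add, smul_smul, pow_succ]
    abel

/-- With `T^d = I + p^s A`, `d` minimal with `T^d ≡ I mod p^s`, and `A` having a unit entry,
the reduction `T_{s+i}` of `T` mod `p^(s+i)` satisfies `T_{s+i}^(d·pⁱ) = 1`, while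
`T_{s+i}^(d·p^(i-1)) ≠ 1` for `i ≥ 1`. -/
theorem stmt_9 (p : ℕ) [Fact p.Prime] (n : ℕ) (hn : 1 ≤ n)
    (T A : Matrix (Fin n) (Fin n) ℤ_[p]) (hT : IsUnit T)
    (d s : ℕ) (hd : 1 ≤ d) (hs : 1 ≤ s) (hps : p ≠ 2 ∨ 2 ≤ s)
    (hTd : T ^ d = 1 + ((p : ℤ_[p]) ^ s) • A)
    (hA : ∃ i j : Fin n, IsUnit (A i j))
    (hmin : ∀ e : ℕ, 1 ≤ e → e < d → (T.map (PadicInt.toZModPow s)) ^ e ≠ 1) :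
    (∀ i : ℕ, (T.map (PadicInt.toZModPow (s + i))) ^ (d * p ^ i) = 1) ∧
    (∀ i : ℕ, 1 ≤ i → (T.map (PadicInt.toZModPow (s + i))) ^ (d * p ^ (i - 1)) ≠ 1) ∧
    (∀ i : ℕ, orderOf (T.map (PadicInt.toZModPow s)) = d →
      orderOf (T.map (PadicInt.toZModPow (s + i))) = d * p ^ i) := by
  have hpp : p.Prime := Fact.out
  have hTd' : T ^ d = 1 + (p ^ s : ℕ) • A := by
    rw [hTd, ← Nat.cast_smul_eq_nsmul ℤ_[p] (p ^ s) A, Nat.cast_pow]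
  have key : ∀ i : ℕ, ∃ C, T ^ (d * p ^ i) = 1 + p ^ (s + i) • (A + p • C) := by
    intro i
    obtain ⟨C, hC⟩ := aux_iter p hpp s hs hps (T ^ d) A hTd' i
    exact ⟨C, by rw [pow_mul]; exact hC⟩
  -- Part 1
  have hpart1 : ∀ i : ℕ, (T.map (PadicInt.toZModPow (s + i))) ^ (d * p ^ i) = 1 := by
    intro i
    obtain ⟨C, hC⟩ := key i
    have h := congrArg ((PadicInt.toZModPow (p := p) (s + i)).mapMatrix) hC
    rw [map_pow, map_add, map_one, map_nsmul] at h
    have hz : (p ^ (s + i) : ℕ) •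
        ((PadicInt.toZModPow (p := p) (s + i)).mapMatrix (A + p • C)) = 0 := by
      rw [← Nat.cast_smul_eq_nsmul (ZMod (p ^ (s + i)))]
      simp [ZMod.natCast_self]
    rw [← RingHom.mapMatrix_apply]
    rw [h, hz, add_zero]
  -- Part 2
  have hpart2 : ∀ i : ℕ, 1 ≤ i →
      (T.map (PadicInt.toZModPow (s + i))) ^ (d * p ^ (i - 1)) ≠ 1 := by
    intro i hi hcontra
    obtain ⟨C, hC⟩ := key (i - 1)
    have h := congrArg ((PadicInt.toZModPow (p := p) (s + i)).mapMatrix) hC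
    rw [map_pow, map_add, map_one, map_nsmul] at h
    rw [← RingHom.mapMatrix_apply, h] at hcontra
    have h0 : (p ^ (s + (i - 1)) : ℕ) •
        ((PadicInt.toZModPow (p := p) (s + i)).mapMatrix (A + p • C)) = 0 :=
      (add_eq_left).mp hcontra
    obtain ⟨j, k, hjk⟩ := hA
    -- the (j,k) entry of A + p•C is a unit
    have hBu : IsUnit ((A + p • C) j k) := by
      by_contra hnu
      have hB : (A + p • C) j k = A j k + (p : ℤ_[p]) * C j k := by
        simp only [Matrix.add_apply, Matrix.smul_apply]
        rw [nsmul_eq_mul]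
      have hpmem : (p : ℤ_[p]) ∈ IsLocalRing.maximalIdeal ℤ_[p] := by
        rw [IsLocalRing.mem_maximalIdeal]
        intro hu
        have := PadicInt.isUnit_iff.mp hu
        rw [PadicInt.norm_p] at this
        have h2 : (1 : ℝ) < (p : ℝ) := by exact_mod_cast hpp.one_lt
        have : ((p : ℝ))⁻¹ < 1 := inv_lt_one_of_one_lt₀ h2
        simp_all
      have hmem : (A + p • C) j k ∈ IsLocalRing.maximalIdeal ℤ_[p] :=
        (IsLocalRing.mem_maximalIdeal _).mpr hnu
      have hAmem : A j k ∈ IsLocalRing.maximalIdeal ℤ_[p] := by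
        have : A j k = (A + p • C) j k - (p : ℤ_[p]) * C j k := by rw [hB]; ring
        rw [this]
        exact Ideal.sub_mem _ hmem (Ideal.mul_mem_right _ _ hpmem)
      exact (IsLocalRing.mem_maximalIdeal _).mp hAmem hjk
    have hentry := congrArg (fun M => M j k) h0
    simp only [Matrix.smul_apply, Matrix.zero_apply, RingHom.mapMatrix_apply,
      Matrix.map_apply] at hentry
    rw [nsmul_eq_mul] at hentry
    have hu : IsUnit ((PadicInt.toZModPow (p := p) (s + i)) ((A + p • C) j k)) :=
      hBu.map _
    have hzero : ((p ^ (s + (i - 1)) : ℕ) : ZMod (p ^ (s + i))) = 0 :=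
      (hu.mul_left_eq_zero).mp hentry
    rw [ZMod.natCast_eq_zero_iff] at hzero
    rw [Nat.pow_dvd_pow_iff_le_right hpp.one_lt] at hzero
    omega
  refine ⟨hpart1, hpart2, ?_⟩
  -- Part 3
  intro i hord
  set M := T.map (PadicInt.toZModPow (p := p) (s + i)) with hM
  have ho : orderOf M ∣ d * p ^ i := orderOf_dvd_of_pow_eq_one (hpart1 i)
  have hred : T.map (PadicInt.toZModPow (p := p) s)
      = M.map (ZMod.castHom (pow_dvd_pow p (Nat.le_add_right s i)) (ZMod (p ^ s))) := by
    rw [hM, Matrix.map_map]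
    have hc := PadicInt.zmod_cast_comp_toZModPow (p := p) s (s + i) (Nat.le_add_right s i)
    rw [← RingHom.coe_comp, hc]
  have hd_dvd : d ∣ orderOf M := by
    rw [← hord]
    apply orderOf_dvd_of_pow_eq_one
    have h1 : M ^ orderOf M = 1 := pow_orderOf_eq_one M
    have h2 := congrArg ((ZMod.castHom (pow_dvd_pow p (Nat.le_add_right s i))
      (ZMod (p ^ s))).mapMatrix) h1
    rw [map_pow, map_one] at h2
    rw [hred, ← RingHom.mapMatrix_apply]
    exact h2
  obtain ⟨k, hk⟩ := hd_dvd
  have hkdvd : k ∣ p ^ i := by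
    have := hk ▸ ho
    exact (Nat.mul_dvd_mul_iff_left (show 0 < d by omega)).mp this
  obtain ⟨j, hj, hkj⟩ := (Nat.dvd_prime_pow hpp).mp hkdvd
  rcases eq_or_lt_of_le hj with heq | hlt
  · rw [hk, hkj, heq]
  · exfalso
    apply hpart2 i (by omega)
    have hdvd : orderOf M ∣ d * p ^ (i - 1) := by
      rw [hk, hkj]
      exact Nat.mul_dvd_mul_left d (pow_dvd_pow p (by omega))
    exact orderOf_dvd_iff_pow_eq_one.mp hdvd
end

section
/- Let c : Fin (n+1) → ℤ define a linear recurrence over ZMod (p^r) with c 0 and c n units mod p. If x : ℤ → ZMod (p^r) is a solution of the recurrence with period d (i.e., x_{j+d} = x_j for all j), then the sequence y : ℤ → ZMod (p^{r+1}) given by y_j = p · (lift of x_j) is a solution of the same recurrence modulo p^{r+1} and has period d as well. Consequently every period occurring for solutions mod p^r also occurs for solutions mod p^{r+1}. -/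
section helpers
variable (p r : ℕ) [Fact p.Prime]

private lemma neZero_pr : NeZero (p ^ r) := ⟨pow_ne_zero r (Fact.out (p := p.Prime)).pos.ne'⟩

private def liftP : ZMod (p ^ r) →+ ZMod (p ^ (r + 1)) where
  toFun z := (p : ZMod (p ^ (r + 1))) * ((z.val : ℕ) : ZMod (p ^ (r + 1)))
  map_zero' := by
    haveI := neZero_pr p r
    simp [ZMod.val_zero]
  map_add' a b := by
    haveI := neZero_pr p r
    show (p : ZMod (p ^ (r + 1))) * (((a + b).val : ℕ) : ZMod (p ^ (r + 1)))
        = _ * (a.val : ZMod (p ^ (r + 1))) + _ * (b.val : ZMod (p ^ (r + 1)))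
    rw [← Nat.cast_mul, ← Nat.cast_mul, ← Nat.cast_mul, ← Nat.cast_add, ← Nat.mul_add,
      ZMod.natCast_eq_natCast_iff]
    have h : (a + b).val ≡ a.val + b.val [MOD p ^ r] := by
      rw [ZMod.val_add]; exact Nat.mod_modEq _ _
    have := h.mul_left' (c := p)
    simpa [pow_succ, mul_comm] using this

private lemma liftP_inj : Function.Injective (liftP p r) := by
  haveI := neZero_pr p r
  have hp : 0 < p := (Fact.out (p := p.Prime)).pos
  refine (injective_iff_map_eq_zero _).2 fun z hz => ?_
  have h1 : ((p * z.val : ℕ) : ZMod (p ^ (r + 1))) = 0 := by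
    rw [Nat.cast_mul]; exact hz
  rw [ZMod.natCast_eq_zero_iff] at h1
  have hdvd : p ^ r ∣ z.val := by
    rcases h1 with ⟨k, hk⟩
    refine ⟨k, Nat.eq_of_mul_eq_mul_left hp ?_⟩
    rw [hk, pow_succ]; ring
  have hz0 : z.val = 0 := Nat.eq_zero_of_dvd_of_lt hdvd (ZMod.val_lt z)
  exact (ZMod.val_eq_zero z).1 hz0

end helpers

private lemma liftP_int_mul (p r : ℕ) [Fact p.Prime] (m : ℤ) (a : ZMod (p ^ r)) :
    liftP p r ((m : ZMod (p ^ r)) * a) = (m : ZMod (p ^ (r + 1))) * liftP p r a := by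
  rw [← zsmul_eq_mul, ← zsmul_eq_mul, map_zsmul]

/-- A `d`-periodic solution `x` of the recurrence mod `p^r` lifts, via multiplication by
`p`, to a solution `y_j = p·x̃_j` of the same recurrence mod `p^(r+1)` with the same period;
moreover `y` has exactly the same periods as `x`. -/
theorem stmt_11 (p : ℕ) [Fact p.Prime] (r n : ℕ) (hr : 1 ≤ r) (hn : 1 ≤ n)
    (c : Fin (n + 1) → ℤ)
    (h0 : IsUnit ((c 0 : ZMod p))) (hlast : IsUnit ((c (Fin.last n) : ZMod p)))
    (x : ℤ → ZMod (p ^ r))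
    (hx : ∀ j : ℤ, ∑ i : Fin (n + 1), (c i : ZMod (p ^ r)) * x (j + (i : ℕ)) = 0)
    (d : ℕ) (hd : 1 ≤ d) (hper : ∀ j : ℤ, x (j + d) = x j) :
    ∀ y : ℤ → ZMod (p ^ (r + 1)),
      (y = fun j => (p : ZMod (p ^ (r + 1))) * ((x j).val : ZMod (p ^ (r + 1)))) →
      (∀ j : ℤ, ∑ i : Fin (n + 1), (c i : ZMod (p ^ (r + 1))) * y (j + (i : ℕ)) = 0) ∧
      (∀ j : ℤ, y (j + d) = y j) ∧
      (∀ e : ℕ, 1 ≤ e → ((∀ j : ℤ, y (j + e) = y j) ↔ (∀ j : ℤ, x (j + e) = x j))) := by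
  intro y hy
  have hyl : ∀ j, y j = liftP p r (x j) := fun j => by rw [hy]; rfl
  refine ⟨fun j => ?_, fun j => by rw [hyl, hyl, hper], fun e he => ?_⟩
  · calc ∑ i : Fin (n + 1), (c i : ZMod (p ^ (r + 1))) * y (j + (i : ℕ))
        = ∑ i : Fin (n + 1), liftP p r ((c i : ZMod (p ^ r)) * x (j + (i : ℕ))) := by
          refine Finset.sum_congr rfl fun i _ => ?_
          rw [hyl, liftP_int_mul]
      _ = liftP p r (∑ i : Fin (n + 1), (c i : ZMod (p ^ r)) * x (j + (i : ℕ))) :=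
          (map_sum _ _ _).symm
      _ = 0 := by rw [hx, map_zero]
  · constructor
    · intro h j
      exact liftP_inj p r (by rw [← hyl, ← hyl, h])
    · intro h j
      rw [hyl, hyl, h]
end
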